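/- Let q ≥ 3 be an integer and Γ_q the Hecke triangle group in SL(2,ℝ). Let g ∈ Γ_q be reduced, i.e. tr g > 2, the lower-left entry of g is nonzero, and w_a(g) > 0 > w_r(g). Then there exist n ≥ 1 and k₁, …, k_n ∈ {1, …, q−1} such that g = p_{k₁} ⋯ p_{k_n} or g = −p_{k₁} ⋯ p_{k_n}. -/

import Mathlib

/-!
The relations `p_k S T = -p_{k+1}`, `p_1 = T` and `p_q = -S` show that right multiplication by
`S^{±1}` and `T^{±1}` preserves the shape `±S^e p_{k₁} ⋯ p_{k_n} S^f` with `e, f ∈ {0, 1}` and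
`1 ≤ kᵢ ≤ q - 1`, so every element of `Γ_q` has this shape. Products of the `p_k` have nonnegative
entries, whereas a reduced `g` has positive off-diagonal entries and positive trace; computing the
entries of `±S P`, `±P S` and `±S P S` shows that none of them can be reduced, so `e = f = 0`.
-/

noncomputable section

abbrev SL2 := Matrix.SpecialLinearGroup (Fin 2) ℝ

/-- `S = [[0,1],[−1,0]] ∈ SL(2,ℝ)`. -/
def Smat : SL2 := ⟨!![0, 1; -1, 0], by norm_num [Matrix.det_fin_two_of]⟩

/-- `T_q = [[1, λ_q],[0,1]] ∈ SL(2,ℝ)` where `λ_q = 2cos(π/q)`. -/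
def Tmat (q : ℕ) : SL2 :=
  ⟨!![1, 2 * Real.cos (Real.pi / q); 0, 1], by norm_num [Matrix.det_fin_two_of]⟩

/-- The Hecke triangle group `Γ_q ≤ SL(2,ℝ)`, generated by `S` and `T_q`. -/
def Hecke (q : ℕ) : Subgroup SL2 := Subgroup.closure {Smat, Tmat q}

/-- The matrix `p_k = (1/sin(π/q)) · [[sin(kπ/q), sin((k+1)π/q)], [sin((k−1)π/q), sin(kπ/q)]]`. -/
def pMat (q : ℕ) (k : ℤ) : Matrix (Fin 2) (Fin 2) ℝ :=
  (Real.sin (Real.pi / q))⁻¹ •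
    !![Real.sin ((k : ℝ) * Real.pi / q), Real.sin (((k : ℝ) + 1) * Real.pi / q);
       Real.sin (((k : ℝ) - 1) * Real.pi / q), Real.sin ((k : ℝ) * Real.pi / q)]

/-- Trace of an element of `SL(2,ℝ)`. -/
def trc (g : SL2) : ℝ := g.1 0 0 + g.1 1 1

/-- `λ₊(g) = (tr g + √((tr g)² − 4))/2`. -/
def lamP (g : SL2) : ℝ := (trc g + Real.sqrt ((trc g) ^ 2 - 4)) / 2

/-- `λ₋(g) = (tr g − √((tr g)² − 4))/2`. -/
def lamM (g : SL2) : ℝ := (trc g - Real.sqrt ((trc g) ^ 2 - 4)) / 2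

/-- Attracting fixed point `w_a(g) = (λ₊(g) − d)/c` of a hyperbolic `g` with `c ≠ 0`. -/
def wA (g : SL2) : ℝ := (lamP g - g.1 1 1) / g.1 1 0

/-- Repelling fixed point `w_r(g) = (λ₋(g) − d)/c` of a hyperbolic `g` with `c ≠ 0`. -/
def wR (g : SL2) : ℝ := (lamM g - g.1 1 1) / g.1 1 0

local notation "M₂" => Matrix (Fin 2) (Fin 2) ℝ
local notation "𝐒" => ((Smat : SL2) : M₂)
local notation "𝐓" q:max => ((Tmat q : SL2) : M₂)
local notation "𝐓⁻¹" q:max => (((Tmat q)⁻¹ : SL2) : M₂)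

lemma offDiag_pos_of_reduced {g : SL2} (ha : 0 < wA g) (hr : wR g < 0) :
    0 < g.1 0 1 ∧ 0 < g.1 1 0 := by
  have hdiff : wA g - wR g = √(trc g ^ 2 - 4) / g.1 1 0 := by
    simp only [wA, wR, lamP, lamM]
    ring
  obtain ⟨hs, hc⟩ : 0 < √(trc g ^ 2 - 4) ∧ 0 < g.1 1 0 := by
    rcases div_pos_iff.1 (hdiff ▸ sub_pos.2 (hr.trans ha)) with h | h
    · exact h
    · exact absurd h.1 (Real.sqrt_nonneg _).not_gt
  have hsq : √(trc g ^ 2 - 4) ^ 2 = trc g ^ 2 - 4 := Real.sq_sqrt (Real.sqrt_pos.1 hs).le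
  have hdet : g.1 0 0 * g.1 1 1 - g.1 0 1 * g.1 1 0 = 1 := by
    rw [← Matrix.det_fin_two]; exact g.2
  have hprod : (lamP g - g.1 1 1) * (lamM g - g.1 1 1) = -(g.1 0 1 * g.1 1 0) := by
    simp only [lamP, lamM, trc] at hsq ⊢
    linear_combination (-1 / 4 : ℝ) * hsq - hdet
  have hP : 0 < lamP g - g.1 1 1 := (div_pos_iff_of_pos_right hc).1 ha
  have hM : lamM g - g.1 1 1 < 0 := neg_of_div_neg_left hr hc.le
  have hbc : 0 < g.1 0 1 * g.1 1 0 := by linarith [mul_neg_of_pos_of_neg hP hM]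
  exact ⟨pos_of_mul_pos_left hbc hc.le, hc⟩

namespace Hecke

variable {q : ℕ}

lemma coe_Smat : 𝐒 = !![0, 1; -1, 0] := rfl

lemma coe_Tmat : 𝐓 q = !![1, 2 * Real.cos (Real.pi / q); 0, 1] := rfl

lemma sin_pi_div_pos (hq : 2 ≤ q) : 0 < Real.sin (Real.pi / q) := by
  apply Real.sin_pos_of_pos_of_lt_pi (by positivity)
  exact div_lt_self Real.pi_pos (by exact_mod_cast hq)

lemma sin_add_one_add_sin_sub_one (y : ℝ) :
    Real.sin ((y + 1) * Real.pi / q) + Real.sin ((y - 1) * Real.pi / q) =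
      2 * Real.cos (Real.pi / q) * Real.sin (y * Real.pi / q) := by
  rw [add_mul, sub_mul, add_div, sub_div, Real.sin_add, Real.sin_sub]
  ring_nf

lemma pMat_mul_Smat_mul_Tmat (k : ℤ) : pMat q k * (𝐒 * 𝐓 q) = -pMat q (k + 1) := by
  have h₀ := sin_add_one_add_sin_sub_one (q := q) k
  have h₁ := sin_add_one_add_sin_sub_one (q := q) (k + 1)
  simp only [add_sub_cancel_right] at h₁
  ext i j
  fin_cases i <;> fin_cases j <;>
    simp [pMat, coe_Smat, coe_Tmat, Matrix.mul_apply, Fin.sum_univ_two]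
  · linear_combination (Real.sin (Real.pi / q))⁻¹ * h₁
  · linear_combination (Real.sin (Real.pi / q))⁻¹ * h₀

lemma pMat_one (hq : 2 ≤ q) : pMat q 1 = 𝐓 q := by
  have hs := (sin_pi_div_pos hq).ne'
  ext i j
  fin_cases i <;> fin_cases j <;> simp [pMat, coe_Tmat, hs]
  rw [one_add_one_eq_two, mul_div_assoc, Real.sin_two_mul]
  field_simp

lemma pMat_natCast_self (hq : 2 ≤ q) : pMat q q = -𝐒 := by
  have hs := (sin_pi_div_pos hq).ne'
  have hq₀ : (q : ℝ) ≠ 0 := by positivity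
  have h₀ : (q : ℝ) * Real.pi / q = Real.pi := by field_simp
  have hadd : ((q : ℝ) + 1) * Real.pi / q = Real.pi / q + Real.pi := by field_simp; ring
  have hsub : ((q : ℝ) - 1) * Real.pi / q = Real.pi - Real.pi / q := by field_simp
  ext i j
  fin_cases i <;> fin_cases j <;> simp [pMat, coe_Smat, h₀, hadd, hsub, Real.sin_add_pi, hs]

lemma pMat_nonneg (hq : 2 ≤ q) {k : ℕ} (hk₁ : 1 ≤ k) (hkq : k ≤ q - 1) (i j : Fin 2) :
    0 ≤ pMat q k i j := by
  have hs := sin_pi_div_pos hq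
  have hsin : ∀ x : ℝ, 0 ≤ x → x ≤ q → 0 ≤ Real.sin (x * Real.pi / q) := fun x hx₀ hxq =>
    Real.sin_nonneg_of_nonneg_of_le_pi (by positivity)
      (div_le_of_le_mul₀ (by positivity) Real.pi_pos.le (by nlinarith [Real.pi_pos]))
  have hk₁' : (1 : ℝ) ≤ k := by exact_mod_cast hk₁
  have hkq' : (k : ℝ) + 1 ≤ q := by exact_mod_cast (by omega : k + 1 ≤ q)
  fin_cases i <;> fin_cases j <;> simp only [pMat] <;> simp <;>
    exact mul_nonneg (inv_nonneg.2 hs.le) (hsin _ (by linarith) (by linarith))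

lemma Smat_mul_Smat : 𝐒 * 𝐒 = -1 := by
  simp [coe_Smat, Matrix.one_fin_two]

lemma Tmat_mul_Tmat_inv : 𝐓 q * 𝐓⁻¹ q = 1 := by
  rw [← Matrix.SpecialLinearGroup.coe_mul, mul_inv_cancel, Matrix.SpecialLinearGroup.coe_one]

lemma pMat_mul_Tmat_inv (k : ℤ) : pMat q k * 𝐓⁻¹ q = -(pMat q (k - 1) * 𝐒) := by
  rw [← neg_neg (pMat q k), ← sub_add_cancel k 1, ← pMat_mul_Smat_mul_Tmat, add_sub_cancel_right,
    neg_mul, mul_assoc, mul_assoc, Tmat_mul_Tmat_inv, mul_one]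

lemma Smat_mul_Tmat_inv (hq : 2 ≤ q) : 𝐒 * 𝐓⁻¹ q = pMat q (q - 1) * 𝐒 := by
  have h := pMat_mul_Tmat_inv (q := q) q
  rwa [pMat_natCast_self hq, neg_mul, neg_inj] at h

lemma pMat_sub_one_mul_Smat_mul_Tmat (hq : 2 ≤ q) : pMat q (q - 1) * (𝐒 * 𝐓 q) = 𝐒 := by
  rw [pMat_mul_Smat_mul_Tmat, sub_add_cancel, pMat_natCast_self hq, neg_neg]

lemma Tmat_inv_eq (hq : 2 ≤ q) : 𝐓⁻¹ q = -(𝐒 * (pMat q (q - 1) * 𝐒)) := by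
  rw [← Smat_mul_Tmat_inv hq, ← mul_assoc, Smat_mul_Smat, neg_one_mul, neg_neg]

def pProd (q : ℕ) (L : List ℕ) : M₂ := (L.map fun k : ℕ => pMat q (k : ℤ)).prod

/-- Written this way, as in the main statement, `L.map (fun k => pMat q (k : ℤ))` elaborates with
`L` coerced to a `List ℤ` through the monadic lift `do let a ← L; pure ↑a`. -/
lemma prod_map_pMat_eq_pProd (L : List ℕ) :
    (L.map (fun k => pMat q (k : ℤ))).prod = pProd q L := by
  simp only [pProd, bind_pure_comp, List.map_eq_map, List.map_map, Function.comp_def]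

lemma pProd_append_singleton (L : List ℕ) (k : ℕ) :
    pProd q (L ++ [k]) = pProd q L * pMat q k := by
  simp [pProd]

lemma pProd_nonneg (hq : 2 ≤ q) {L : List ℕ} (hL : ∀ k ∈ L, 1 ≤ k ∧ k ≤ q - 1) (i j : Fin 2) :
    0 ≤ pProd q L i j := by
  induction L generalizing i j with
  | nil => exact Matrix.zero_le_one_elem i j
  | cons k L ih =>
    simp only [List.forall_mem_cons] at hL
    simp only [pProd, List.map_cons, List.prod_cons, Matrix.mul_apply, Fin.sum_univ_two]
    have hk := pMat_nonneg hq hL.1.1 hL.1.2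
    exact add_nonneg (mul_nonneg (hk i 0) (ih hL.2 0 j)) (mul_nonneg (hk i 1) (ih hL.2 1 j))

def HasNormalForm (q : ℕ) (M : M₂) : Prop :=
  ∃ (ε : ℤˣ) (e f : Bool) (L : List ℕ), (∀ k ∈ L, 1 ≤ k ∧ k ≤ q - 1) ∧
    M = ε • (𝐒 ^ e.toNat * pProd q L * 𝐒 ^ f.toNat)

namespace HasNormalForm

lemma one : HasNormalForm q 1 := ⟨1, false, false, [], by simp [pProd]⟩

lemma mul_Smat {M : M₂} (h : HasNormalForm q M) : HasNormalForm q (M * 𝐒) := by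
  obtain ⟨ε, e, f, L, hL, rfl⟩ := h
  cases f
  · exact ⟨ε, e, true, L, hL, by simp [smul_mul_assoc]⟩
  · exact ⟨-ε, e, false, L, hL, by simp [smul_mul_assoc, mul_assoc, Smat_mul_Smat]⟩

lemma mul_Smat_inv {M : M₂} (h : HasNormalForm q M) :
    HasNormalForm q (M * ((Smat⁻¹ : SL2) : M₂)) := by
  have hS : ((Smat⁻¹ : SL2) : M₂) = 𝐒 * 𝐒 * 𝐒 := by simp [coe_Smat]
  rw [hS, ← mul_assoc, ← mul_assoc]
  exact h.mul_Smat.mul_Smat.mul_Smat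

lemma mul_Tmat (hq : 2 ≤ q) {M : M₂} (h : HasNormalForm q M) : HasNormalForm q (M * 𝐓 q) := by
  obtain ⟨ε, e, f, L, hL, rfl⟩ := h
  have hq₁ : 1 ≤ q - 1 := by omega
  cases f
  · refine ⟨ε, e, false, L ++ [1],
      List.forall_mem_append.2 ⟨hL, List.forall_mem_singleton.2 ⟨le_rfl, hq₁⟩⟩, ?_⟩
    simp [pProd_append_singleton, pMat_one hq, smul_mul_assoc, mul_assoc]
  rcases L.eq_nil_or_concat' with rfl | ⟨L, k, rfl⟩
  · cases e
    · exact ⟨ε, true, false, [1], by simpa using hq₁, by simp [pProd, pMat_one hq, smul_mul_assoc]⟩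
    · exact ⟨-ε, false, false, [1], by simpa using hq₁,
        by simp [pProd, pMat_one hq, smul_mul_assoc, Smat_mul_Smat]⟩
  simp only [List.forall_mem_append, List.forall_mem_singleton] at hL
  obtain rfl | hk := eq_or_ne k (q - 1)
  · refine ⟨ε, e, true, L, hL.1, ?_⟩
    simp [pProd_append_singleton, smul_mul_assoc, mul_assoc, Nat.cast_sub (by omega : 1 ≤ q),
      pMat_sub_one_mul_Smat_mul_Tmat hq]
  · refine ⟨-ε, e, false, L ++ [k + 1],
      List.forall_mem_append.2 ⟨hL.1, List.forall_mem_singleton.2 (by omega)⟩, ?_⟩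
    simp [pProd_append_singleton, smul_mul_assoc, mul_assoc, pMat_mul_Smat_mul_Tmat]

-- Keeps `↑(Tmat q)⁻¹` from being unfolded to an adjugate, so that the relations above apply.
attribute [-simp] Matrix.SpecialLinearGroup.coe_inv

lemma mul_Tmat_inv (hq : 2 ≤ q) {M : M₂} (h : HasNormalForm q M) :
    HasNormalForm q (M * 𝐓⁻¹ q) := by
  obtain ⟨ε, e, f, L, hL, rfl⟩ := h
  have hq₁ : 1 ≤ q - 1 := by omega
  have hcast : ((q - 1 : ℕ) : ℤ) = q - 1 := by omega
  cases f
  swap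
  · refine ⟨ε, e, true, L ++ [q - 1],
      List.forall_mem_append.2 ⟨hL, List.forall_mem_singleton.2 ⟨hq₁, le_rfl⟩⟩, ?_⟩
    simp [pProd_append_singleton, smul_mul_assoc, mul_assoc, hcast, Smat_mul_Tmat_inv hq]
  rcases L.eq_nil_or_concat' with rfl | ⟨L, k, rfl⟩
  · cases e
    · exact ⟨-ε, true, true, [q - 1], by simpa using hq₁,
        by simp [pProd, hcast, Tmat_inv_eq hq, smul_mul_assoc, mul_assoc]⟩
    · exact ⟨ε, false, true, [q - 1], by simpa using hq₁,
        by simp [pProd, hcast, Smat_mul_Tmat_inv hq, smul_mul_assoc]⟩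
  simp only [List.forall_mem_append, List.forall_mem_singleton] at hL
  obtain rfl | hk := eq_or_ne k 1
  · refine ⟨ε, e, false, L, hL.1, ?_⟩
    simp [pProd_append_singleton, smul_mul_assoc, mul_assoc, pMat_one hq, Tmat_mul_Tmat_inv]
  · refine ⟨-ε, e, true, L ++ [k - 1],
      List.forall_mem_append.2 ⟨hL.1, List.forall_mem_singleton.2 (by omega)⟩, ?_⟩
    simp [pProd_append_singleton, smul_mul_assoc, mul_assoc, pMat_mul_Tmat_inv, Nat.cast_sub hL.2.1]

lemma exists_pProd_of_pos (hq : 2 ≤ q) {M : M₂} (h : HasNormalForm q M)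
    (htr : 0 < M 0 0 + M 1 1) (hb : 0 < M 0 1) (hc : 0 < M 1 0) :
    ∃ L : List ℕ, L ≠ [] ∧ (∀ k ∈ L, 1 ≤ k ∧ k ≤ q - 1) ∧ (M = pProd q L ∨ M = -pProd q L) := by
  obtain ⟨ε, e, f, L, hL, rfl⟩ := h
  have hP := pProd_nonneg hq hL
  cases e <;> cases f
  · refine ⟨L, ?_, hL, ?_⟩
    · rintro rfl
      simp [pProd] at hc
    · rcases Int.units_eq_one_or ε with rfl | rfl <;> simp
  all_goals
    exfalso
    rcases Int.units_eq_one_or ε with rfl | rfl <;>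
      simp [coe_Smat, Matrix.mul_apply, Fin.sum_univ_two, Matrix.vecMul, dotProduct]
        at htr hb hc <;>
      linarith [hP 0 0, hP 0 1, hP 1 0, hP 1 1]

end HasNormalForm

lemma hasNormalForm_of_mem (hq : 2 ≤ q) {g : SL2} (hg : g ∈ Hecke q) : HasNormalForm q g := by
  induction hg using Subgroup.closure_induction_right with
  | one => exact .one
  | mul_right x _ y hy ih =>
    rw [Matrix.SpecialLinearGroup.coe_mul]
    rcases hy with rfl | rfl
    · exact ih.mul_Smat
    · exact ih.mul_Tmat hq
  | mul_inv_cancel x _ y hy ih =>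
    rw [Matrix.SpecialLinearGroup.coe_mul]
    rcases hy with rfl | rfl
    · exact ih.mul_Smat_inv
    · exact ih.mul_Tmat_inv hq

end Hecke

open Hecke

theorem stmt_15_general (q : ℕ) (hq : 3 ≤ q) (g : SL2) (hg : g ∈ Hecke q)
    (htr : trc g > 2) (hred : wA g > 0 ∧ 0 > wR g) :
    ∃ L : List ℕ, L ≠ [] ∧ (∀ k ∈ L, 1 ≤ k ∧ k ≤ q - 1) ∧
      (g.1 = (L.map (fun k => pMat q (k : ℤ))).prod ∨
       g.1 = -((L.map (fun k => pMat q (k : ℤ))).prod)) := by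
  obtain ⟨hb, hc⟩ := offDiag_pos_of_reduced hred.1 hred.2
  have := (hasNormalForm_of_mem (by omega) hg).exists_pProd_of_pos (by omega)
    (by unfold trc at htr; linarith) hb hc
  simpa only [prod_map_pMat_eq_pProd] using this

/-- every reduced `g ∈ Γ_q` (i.e. `tr g > 2`, nonzero lower-left entry,
`w_a(g) > 0 > w_r(g)`) is, up to sign, a nonempty product `p_{k₁} ⋯ p_{k_n}` with
`k₁, …, k_n ∈ {1, …, q−1}`. -/
theorem stmt_15 (q : ℕ) (hq : 3 ≤ q) (g : SL2) (hg : g ∈ Hecke q)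
    (htr : trc g > 2) (hc : g.1 1 0 ≠ 0) (hred : wA g > 0 ∧ 0 > wR g) :
    ∃ L : List ℕ, L ≠ [] ∧ (∀ k ∈ L, 1 ≤ k ∧ k ≤ q - 1) ∧
      (g.1 = (L.map (fun k => pMat q (k : ℤ))).prod ∨
       g.1 = -((L.map (fun k => pMat q (k : ℤ))).prod)) :=
  stmt_15_general q hq g hg htr hred
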